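/- arXiv:2404.13361 — 10 statements merged into one kernel-verified Lean document; each statement's English description precedes it below -/
import Mathlib

section
/- Let S be an atomic meet-semilattice with least element 0 (every nonzero element lies above some atom), and let At(S) denote the set of atoms of S. Then the poset Cl(S) of closed subsets of S ordered by inclusion is order-isomorphic to the powerset of At(S) ordered by inclusion; in particular Cl(S) is a complete atomic Boolean algebra. -/
/-- The orthogonal of a subset of a meet-semilattice with least element `⊥`. -/
def perp {α : Type*} [SemilatticeInf α] [OrderBot α] (A : Set α) : Set α :=
  {x | ∀ y ∈ A, x ⊓ y = ⊥}

lemma perp_perp_eq {α : Type*} [SemilatticeInf α] [OrderBot α]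
    (hatomic : ∀ x : α, x ≠ ⊥ → ∃ a : α, IsAtom a ∧ a ≤ x) (A : Set α) :
    perp (perp A) = {x | ∀ a : α, IsAtom a → a ≤ x → ∃ y ∈ A, a ≤ y} := by
  ext x
  constructor
  · intro hx a ha hax
    by_contra h
    push_neg at h
    have haperp : a ∈ perp A := by
      intro y hy
      rcases ha.le_iff.mp (inf_le_left : a ⊓ y ≤ a) with h1 | h1
      · exact h1
      · exact absurd (h1 ▸ inf_le_right) (h y hy)
    have := hx a haperp
    rw [inf_eq_right.mpr hax] at this
    exact ha.1 this
  · intro hx z hz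
    by_contra h
    obtain ⟨a, ha, hale⟩ := hatomic _ h
    obtain ⟨y, hy, hay⟩ := hx a ha (hale.trans inf_le_left)
    have : a ≤ ⊥ := (hz y hy) ▸ le_inf (hale.trans inf_le_right) hay
    exact ha.1 (le_bot_iff.mp this)

theorem stmt_1 {α : Type*} [SemilatticeInf α] [OrderBot α]
    (hatomic : ∀ x : α, x ≠ ⊥ → ∃ a : α, IsAtom a ∧ a ≤ x) :
    Nonempty ({A : Set α // perp (perp A) = A} ≃o Set {a : α // IsAtom a}) := by
  refine ⟨{
    toFun := fun A => {a | ∃ y ∈ A.1, (a : α) ≤ y}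
    invFun := fun T => ⟨{x | ∀ a : α, (h : IsAtom a) → a ≤ x → (⟨a, h⟩ : {a : α // IsAtom a}) ∈ T}, ?_⟩
    left_inv := ?_
    right_inv := ?_
    map_rel_iff' := ?_ }⟩
  · rw [perp_perp_eq hatomic]
    ext x
    constructor
    · intro hx a ha hax
      obtain ⟨y, hy, hay⟩ := hx a ha hax
      exact hy _ ha hay
    · intro hx a ha hax
      exact ⟨x, hx, hax⟩
  · rintro ⟨A, hA⟩
    ext x
    simp only [Set.mem_setOf_eq]
    constructor
    · intro hx
      rw [← hA, perp_perp_eq hatomic]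
      exact hx
    · intro hx a ha hax
      rw [← hA, perp_perp_eq hatomic] at hx
      exact hx a ha hax
  · intro T
    ext ⟨a, ha⟩
    simp only [Set.mem_setOf_eq]
    constructor
    · rintro ⟨y, hy, hay⟩
      exact hy a ha hay
    · intro h
      refine ⟨a, ?_, le_refl a⟩
      intro b hb hba
      rcases ha.le_iff.mp hba with h1 | h1
      · exact absurd h1 hb.1
      · subst h1; exact h
  · rintro ⟨A, hA⟩ ⟨B, hB⟩
    constructor
    · intro h x hx
      show x ∈ B
      rw [← hB, perp_perp_eq hatomic]
      intro a ha hax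
      have : (⟨a, ha⟩ : {a : α // IsAtom a}) ∈ {b : {a : α // IsAtom a} | ∃ y ∈ A, (b : α) ≤ y} := ⟨x, hx, hax⟩
      exact h this
    · rintro h ⟨a, ha⟩ ⟨y, hy, hay⟩
      exact ⟨y, h hy, hay⟩
end

section
/- Let L be a complete atomic Boolean algebra, regarded as a meet-semilattice with least element 0 = ⊥ and orthogonality x ⊥ y iff x ∧ y = 0. Then the poset Cl(L) of closed subsets of L ordered by inclusion is order-isomorphic to L itself. -/
lemma perp_eq_Iic {α : Type*} [CompleteBooleanAlgebra α] (A : Set α) :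
    perp A = Set.Iic (sSup A)ᶜ := by
  ext x
  simp only [perp, Set.mem_setOf_eq, Set.mem_Iic, le_compl_iff_disjoint_right,
    disjoint_sSup_iff, disjoint_iff, ← disjoint_iff]

theorem stmt_3 {α : Type*} [CompleteBooleanAlgebra α] [IsAtomic α] :
    Nonempty ({A : Set α // perp (perp A) = A} ≃o α) := by
  have hclosed : ∀ a : α, perp (perp (Set.Iic a)) = Set.Iic a := by
    intro a
    rw [perp_eq_Iic, perp_eq_Iic, csSup_Iic, csSup_Iic, compl_compl]
  refine ⟨{
    toFun := fun A => sSup A.1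
    invFun := fun a => ⟨Set.Iic a, hclosed a⟩
    left_inv := ?_
    right_inv := fun _ => csSup_Iic
    map_rel_iff' := ?_ }⟩
  · rintro ⟨A, hA⟩
    have : perp (perp A) = Set.Iic (sSup A) := by
      rw [perp_eq_Iic, perp_eq_Iic, csSup_Iic, compl_compl]
    exact Subtype.ext (this.symm.trans hA)
  · rintro ⟨A, hA⟩ ⟨B, hB⟩
    have hA' : A = Set.Iic (sSup A) := by
      conv_lhs => rw [← hA]
      rw [perp_eq_Iic, perp_eq_Iic, csSup_Iic, compl_compl]
    have hB' : B = Set.Iic (sSup B) := by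
      conv_lhs => rw [← hB]
      rw [perp_eq_Iic, perp_eq_Iic, csSup_Iic, compl_compl]
    constructor
    · intro h
      show A ⊆ B
      rw [hA', hB']
      exact Set.Iic_subset_Iic.mpr h
    · exact fun h => sSup_le_sSup h
end

section
/- Let L be a complete pseudocomplemented lattice. Then the complete ortholattice of closed subsets of L is a complete Boolean algebra; concretely, for all closed subsets A, B, C of L: A ∩ (B ∪ C)^⊥⊥ = ((A ∩ B) ∪ (A ∩ C))^⊥⊥, A ∩ A^⊥ = {0}, and (A ∪ A^⊥)^⊥⊥ = L. -/
lemma perp_antitone {α : Type*} [SemilatticeInf α] [OrderBot α] {S T : Set α}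
    (h : S ⊆ T) : perp T ⊆ perp S := fun _ hx y hy => hx y (h hy)

lemma subset_perp_perp {α : Type*} [SemilatticeInf α] [OrderBot α] (S : Set α) :
    S ⊆ perp (perp S) := fun x hx z hz => by rw [inf_comm]; exact hz x hx

lemma mem_perp_of_le {α : Type*} [SemilatticeInf α] [OrderBot α] {S : Set α} {x x' : α}
    (h : x ∈ perp S) (hle : x' ≤ x) : x' ∈ perp S := fun y hy =>
  le_bot_iff.mp ((inf_le_inf_right y hle).trans_eq (h y hy))

lemma bot_mem_perp {α : Type*} [SemilatticeInf α] [OrderBot α] (S : Set α) :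
    (⊥ : α) ∈ perp S := fun y _ => bot_inf_eq y

theorem stmt_9 {L : Type*} [CompleteLattice L] (star : L → L)
    (hstar : ∀ x y : L, x ⊓ y = ⊥ ↔ y ≤ star x)
    (A B C : Set L) (hA : perp (perp A) = A) (hB : perp (perp B) = B)
    (hC : perp (perp C) = C) :
    A ∩ perp (perp (B ∪ C)) = perp (perp ((A ∩ B) ∪ (A ∩ C))) ∧
    A ∩ perp A = {⊥} ∧
    perp (perp (A ∪ perp A)) = Set.univ := by
  have hAdown : ∀ {x x' : L}, x ∈ A → x' ≤ x → x' ∈ A := by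
    intro x x' hx hle; rw [← hA] at hx ⊢; exact mem_perp_of_le hx hle
  have hBdown : ∀ {x x' : L}, x ∈ B → x' ≤ x → x' ∈ B := by
    intro x x' hx hle; rw [← hB] at hx ⊢; exact mem_perp_of_le hx hle
  have hCdown : ∀ {x x' : L}, x ∈ C → x' ≤ x → x' ∈ C := by
    intro x x' hx hle; rw [← hC] at hx ⊢; exact mem_perp_of_le hx hle
  have h2 : A ∩ perp A = {⊥} := by
    apply Set.Subset.antisymm
    · rintro x ⟨hxA, hxP⟩
      have : x ⊓ x = ⊥ := hxP x hxA
      simpa [inf_idem] using this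
    · rintro x rfl
      exact ⟨by rw [← hA]; exact bot_mem_perp _, bot_mem_perp _⟩
  refine ⟨?_, h2, ?_⟩
  · apply Set.Subset.antisymm
    · rintro a ⟨haA, haBC⟩ z hz
      -- show z ⊓ a ∈ perp (B ∪ C)
      have hza : z ⊓ a ∈ perp (B ∪ C) := by
        rintro y (hy | hy)
        · have hmem : a ⊓ y ∈ (A ∩ B) ∪ (A ∩ C) :=
            Or.inl ⟨hAdown haA inf_le_left, hBdown hy inf_le_right⟩
          have := hz _ hmem
          rwa [inf_assoc]
        · have hmem : a ⊓ y ∈ (A ∩ B) ∪ (A ∩ C) :=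
            Or.inr ⟨hAdown haA inf_le_left, hCdown hy inf_le_right⟩
          have := hz _ hmem
          rwa [inf_assoc]
      have := haBC _ hza
      -- a ⊓ (z ⊓ a) = ⊥ ⇒ a ⊓ z = ⊥
      calc a ⊓ z = a ⊓ (z ⊓ a) := by rw [inf_comm z a, ← inf_assoc, inf_idem]
        _ = ⊥ := this
    · intro x hx
      have h1 : x ∈ A := by
        rw [← hA]
        exact fun y hy => hx y (perp_antitone (fun t ht => ht.elim And.left And.left) hy)
      refine ⟨h1, fun y hy => hx y (perp_antitone ?_ hy)⟩
      rintro t (⟨-, ht⟩ | ⟨-, ht⟩)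
      · exact Or.inl ht
      · exact Or.inr ht
  · apply Set.eq_univ_of_forall
    intro x z hz
    have hz1 : z ∈ perp A := fun y hy => hz y (Or.inl hy)
    have hz2 : z ∈ A := by
      rw [← hA]; exact fun y hy => hz y (Or.inr hy)
    have : z = ⊥ := by
      have : z ∈ A ∩ perp A := ⟨hz2, hz1⟩
      rwa [h2] at this
    simp [this]
end

section
/- Let (P, ≤, *, 0, 1) be a pseudocomplemented poset, with orthogonality x ⊥ y iff y ≤ x*. Then the closed subsets of P form a complete ortholattice; concretely: (i) the intersection of any family of closed subsets is closed; (ii) for every A ⊆ P the set A^⊥ is closed and A^⊥⊥⊥ = A^⊥; (iii) for closed A, B, if A ⊆ B then B^⊥ ⊆ A^⊥; (iv) for every closed A one has A^⊥⊥ = A, A ∩ A^⊥ = {0}, and (A ∪ A^⊥)^⊥⊥ = P. -/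
/-- The orthogonal of a subset of a pseudocomplemented poset, where `x ⊥ y` iff `y ≤ x*`. -/
def pperp {P : Type*} (star : P → P) [LE P] (A : Set P) : Set P :=
  {x | ∀ y ∈ A, y ≤ star x}

section aux
variable {P : Type*} [PartialOrder P] [BoundedOrder P] (star : P → P)

lemma pperp_anti {A B : Set P} (h : A ⊆ B) : pperp star B ⊆ pperp star A :=
  fun x hx y hy => hx y (h hy)

lemma subset_pperp_pperp (hstar : ∀ x y : P, y ≤ star x ↔ ∀ z : P, z ≤ x → z ≤ y → z = ⊥) (A : Set P) : A ⊆ pperp star (pperp star A) := by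
  intro a ha y hy
  rw [hstar]
  intro z hza hzy
  exact (hstar y a).mp (hy a ha) z hzy hza

lemma pperp_pperp_pperp (hstar : ∀ x y : P, y ≤ star x ↔ ∀ z : P, z ≤ x → z ≤ y → z = ⊥) (A : Set P) :
    pperp star (pperp star (pperp star A)) = pperp star A :=
  Set.Subset.antisymm (pperp_anti star (subset_pperp_pperp star hstar A))
    (subset_pperp_pperp star hstar (pperp star A))

lemma bot_mem_pperp (hstar : ∀ x y : P, y ≤ star x ↔ ∀ z : P, z ≤ x → z ≤ y → z = ⊥) (A : Set P) : (⊥ : P) ∈ pperp star A := by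
  intro y _
  rw [hstar]
  intro z hz _
  exact le_antisymm hz bot_le

end aux

theorem stmt_11 {P : Type*} [PartialOrder P] [BoundedOrder P] (star : P → P)
    (hstar : ∀ x y : P, y ≤ star x ↔ ∀ z : P, z ≤ x → z ≤ y → z = ⊥) :
    -- (i) the intersection of any family of closed subsets is closed
    (∀ F : Set (Set P), (∀ A ∈ F, pperp star (pperp star A) = A) →
        pperp star (pperp star (⋂₀ F)) = ⋂₀ F) ∧
    -- (ii) for every A the set A^⊥ is closed, i.e. A^⊥⊥⊥ = A^⊥
    (∀ A : Set P, pperp star (pperp star (pperp star A)) = pperp star A) ∧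
    -- (iii) on closed sets, ^⊥ is antitone
    (∀ A B : Set P, pperp star (pperp star A) = A → pperp star (pperp star B) = B →
        A ⊆ B → pperp star B ⊆ pperp star A) ∧
    -- (iv) for closed A: A^⊥⊥ = A, A ∩ A^⊥ = {⊥}, (A ∪ A^⊥)^⊥⊥ = P
    (∀ A : Set P, pperp star (pperp star A) = A →
        pperp star (pperp star A) = A ∧
        A ∩ pperp star A = {⊥} ∧
        pperp star (pperp star (A ∪ pperp star A)) = Set.univ) := by
  have self_bot : ∀ x : P, x ∈ pperp star {x} → x = ⊥ := by
    intro x hx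
    have := hx x rfl
    exact (hstar x x).mp this x le_rfl le_rfl
  refine ⟨?_, pperp_pperp_pperp star hstar, ?_, ?_⟩
  · intro F hF
    apply Set.Subset.antisymm
    · intro x hx A hA
      rw [← hF A hA]
      exact pperp_anti star (pperp_anti star (Set.sInter_subset_of_mem hA)) hx
    · exact subset_pperp_pperp star hstar _
  · intro A B _ _ h
    exact pperp_anti star h
  · intro A hA
    refine ⟨hA, ?_, ?_⟩
    · apply Set.Subset.antisymm
      · rintro x ⟨hxA, hxP⟩
        have : x ≤ star x := hxP x hxA
        exact (hstar x x).mp this x le_rfl le_rfl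
      · rintro x rfl
        have hbA : (⊥ : P) ∈ A := by
          rw [← hA]; exact bot_mem_pperp star hstar _
        exact ⟨hbA, bot_mem_pperp star hstar A⟩
    · have hsub : pperp star (A ∪ pperp star A) ⊆ {⊥} := by
        intro x hx
        have hxpA : x ∈ pperp star A := fun y hy => hx y (Or.inl hy)
        have : x ≤ star x := hx x (Or.inr hxpA)
        exact (hstar x x).mp this x le_rfl le_rfl
      apply Set.eq_univ_of_forall
      intro x y hy
      have : y = ⊥ := hsub hy
      subst this
      exact bot_le
end

section
/- Let (P, ≤, *, 0, 1) be a pseudocomplemented poset such that any two elements of P* := {x* : x ∈ P} have a greatest lower bound within the subposet (P*, ≤); for x, y ∈ P* write x ∧ y for this infimum and define x ∨ y := (x* ∧ y*)*. Then (P*, ∨, ∧, *, 0, 1) is a Boolean algebra: (P*, ∨, ∧) is a lattice with least element 0 and greatest element 1 that satisfies the distributive law (a ∨ c) ∧ (a ∨ b) ≤ a ∨ (b ∧ c) for all a, b, c ∈ P* (hence is distributive), * is an antitone involution on P*, and for every x ∈ P* one has x ∧ x* = 0 and x ∨ x* = 1. -/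
theorem stmt_12 {P : Type*} [PartialOrder P] [BoundedOrder P] (star : P → P)
    (hstar : ∀ x y : P, y ≤ star x ↔ ∀ z : P, z ≤ x → z ≤ y → z = ⊥)
    (Pstar : Set P) (hPstar : Pstar = Set.range star)
    -- `m a b` is the greatest lower bound of `a` and `b` within the subposet `(P*, ≤)`
    (m : P → P → P)
    (hm : ∀ a ∈ Pstar, ∀ b ∈ Pstar, m a b ∈ Pstar ∧ m a b ≤ a ∧ m a b ≤ b ∧
      ∀ d ∈ Pstar, d ≤ a → d ≤ b → d ≤ m a b)
    -- `j` is the derived join: x ∨ y := (x* ∧ y*)*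
    (j : P → P → P)
    (hj : ∀ a b : P, j a b = star (m (star a) (star b))) :
    -- 0 and 1 belong to P*
    (⊥ : P) ∈ Pstar ∧ (⊤ : P) ∈ Pstar ∧
    -- (P*, ∨, ∧) is a lattice: j gives the least upper bound within P*
    (∀ a ∈ Pstar, ∀ b ∈ Pstar, j a b ∈ Pstar ∧ a ≤ j a b ∧ b ≤ j a b ∧
      ∀ d ∈ Pstar, a ≤ d → b ≤ d → j a b ≤ d) ∧
    -- * is an involution on P*
    (∀ a ∈ Pstar, star a ∈ Pstar ∧ star (star a) = a) ∧
    -- * is antitone on P*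
    (∀ a ∈ Pstar, ∀ b ∈ Pstar, a ≤ b → star b ≤ star a) ∧
    -- distributivity: (a ∨ c) ∧ (a ∨ b) ≤ a ∨ (b ∧ c)
    (∀ a ∈ Pstar, ∀ b ∈ Pstar, ∀ c ∈ Pstar,
      m (j a c) (j a b) ≤ j a (m b c)) ∧
    -- * is a complementation: x ∧ x* = 0 and x ∨ x* = 1
    (∀ a ∈ Pstar, m a (star a) = ⊥ ∧ j a (star a) = ⊤) := by
  have meet_bot : ∀ x z : P, z ≤ x → z ≤ star x → z = ⊥ := fun x z h1 h2 =>
    (hstar x (star x)).mp le_rfl z h1 h2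
  have anti : ∀ x y : P, x ≤ y → star y ≤ star x := fun x y h =>
    (hstar x (star y)).mpr fun z h1 h2 => meet_bot y z (h1.trans h) h2
  have lss : ∀ x : P, x ≤ star (star x) := fun x =>
    (hstar (star x) x).mpr fun z h1 h2 => meet_bot x z h2 h1
  have mem_star : ∀ x : P, star x ∈ Pstar := fun x => hPstar ▸ ⟨x, rfl⟩
  have inv : ∀ a ∈ Pstar, star (star a) = a := by
    intro a ha
    rw [hPstar] at ha
    obtain ⟨x, rfl⟩ := ha
    exact le_antisymm (anti _ _ (lss x)) (lss (star x))
  -- lift through double star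
  have key : ∀ z : P, ∀ v ∈ Pstar, z ≤ v → star (star z) ≤ v := fun z v hv h =>
    (inv v hv) ▸ anti _ _ (anti _ _ h)
  have star_top : star ⊤ = ⊥ := meet_bot ⊤ (star ⊤) le_top le_rfl
  have star_bot : star ⊥ = ⊤ := le_antisymm le_top
    ((hstar ⊥ ⊤).mpr fun z h1 _ => le_bot_iff.mp h1)
  have hbot : (⊥ : P) ∈ Pstar := star_top ▸ mem_star ⊤
  have htop : (⊤ : P) ∈ Pstar := star_bot ▸ mem_star ⊥
  have hjoin : ∀ a ∈ Pstar, ∀ b ∈ Pstar, j a b ∈ Pstar ∧ a ≤ j a b ∧ b ≤ j a b ∧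
      ∀ d ∈ Pstar, a ≤ d → b ≤ d → j a b ≤ d := by
    intro a ha b hb
    obtain ⟨hmem, hle1, hle2, hglb⟩ := hm (star a) (mem_star a) (star b) (mem_star b)
    rw [hj]
    refine ⟨mem_star _, ?_, ?_, ?_⟩
    · have := anti _ _ hle1; rwa [inv a ha] at this
    · have := anti _ _ hle2; rwa [inv b hb] at this
    · intro d hd h1 h2
      have hd' : star d ≤ m (star a) (star b) :=
        hglb (star d) (mem_star d) (anti _ _ h1) (anti _ _ h2)
      have := anti _ _ hd'; rwa [inv d hd] at this
  refine ⟨hbot, htop, hjoin, fun a ha => ⟨mem_star _, inv a ha⟩,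
    fun a _ b _ h => anti a b h, ?_, ?_⟩
  · -- distributivity
    intro a ha b hb c hc
    obtain ⟨hbc_mem, hbc1, hbc2, hbc_glb⟩ := hm b hb c hc
    obtain ⟨hac_mem, -, -, -⟩ := hjoin a ha c hc
    obtain ⟨hab_mem, -, -, -⟩ := hjoin a ha b hb
    obtain ⟨hM_mem, hM1, hM2, -⟩ := hm (j a c) hac_mem (j a b) hab_mem
    obtain ⟨-, hN1, hN2, hN_glb⟩ :=
      hm (star a) (mem_star a) (star (m b c)) (mem_star (m b c))
    rw [hj a (m b c)]
    apply (hstar _ _).mpr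
    intro z hz1 hz2
    -- hz1 : z ≤ m (star a) (star (m b c)), hz2 : z ≤ m (j a c) (j a b)
    have hza : z ≤ star a := hz1.trans hN1
    have hzmbc : z ≤ star (m b c) := hz1.trans hN2
    set w := star (star z) with hw
    have hw_mem : w ∈ Pstar := mem_star _
    have hw_a : w ≤ star a := key z _ (mem_star a) hza
    have hw_mbc : w ≤ star (m b c) := key z _ (mem_star (m b c)) hzmbc
    have hw_ac : w ≤ j a c := key z _ hac_mem (hz2.trans hM1)
    have hw_ab : w ≤ j a b := key z _ hab_mem (hz2.trans hM2)
    -- claim : for x ∈ Pstar, if w ≤ j a x then w ≤ x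
    have claim : ∀ x ∈ Pstar, w ≤ j a x → w ≤ x := by
      intro x hx hwx
      obtain ⟨hmx_mem, hmx1, hmx2, hmx_glb⟩ := hm (star a) (mem_star a) (star x) (mem_star x)
      rw [hj] at hwx
      have : w ≤ star (star x) := by
        apply (hstar _ _).mpr
        intro u hu1 hu2
        -- hu1 : u ≤ star x, hu2 : u ≤ w
        have hu_x : star (star u) ≤ star x := key u _ (mem_star x) hu1
        have hu_w : star (star u) ≤ w := key u _ hw_mem hu2
        have hu_a : star (star u) ≤ star a := hu_w.trans hw_a
        have hu_m : star (star u) ≤ m (star a) (star x) :=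
          hmx_glb _ (mem_star _) hu_a hu_x
        have : star (star u) = ⊥ :=
          meet_bot (m (star a) (star x)) _ hu_m (hu_w.trans hwx)
        exact le_bot_iff.mp ((lss u).trans_eq this)
      exact this.trans_eq (inv x hx)
    have hw_b : w ≤ b := claim b hb hw_ab
    have hw_c : w ≤ c := claim c hc hw_ac
    have hw_bc : w ≤ m b c := hbc_glb w hw_mem hw_b hw_c
    have hw_bot : w = ⊥ := meet_bot (m b c) w hw_bc hw_mbc
    exact le_bot_iff.mp ((lss z).trans_eq hw_bot)
  · -- complementation
    intro a ha
    constructor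
    · obtain ⟨-, h1, h2, -⟩ := hm a ha (star a) (mem_star a)
      exact meet_bot a _ h1 h2
    · rw [hj, inv a ha]
      obtain ⟨-, h1, h2, -⟩ := hm (star a) (mem_star a) a ha
      have : m (star a) a = ⊥ := meet_bot a _ h2 h1
      rw [this, star_bot]
end

section
/- Let (P, ≤, *, 0, 1) be a pseudocomplemented poset such that for every subset B of P* := {x* : x ∈ P} there exists an element c ∈ P* which is the greatest lower bound of B in (P, ≤) (so (P*, ≤) is a complete lattice whose infima coincide with infima in P). Then for every subset A of P there exists b ∈ P with A^⊥ = {b}^⊥ = {x ∈ P : x ≤ b*}. -/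
theorem stmt_13 {P : Type*} [PartialOrder P] [BoundedOrder P] (star : P → P)
    (hstar : ∀ x y : P, y ≤ star x ↔ ∀ z : P, z ≤ x → z ≤ y → z = ⊥)
    -- every subset of P* has a greatest lower bound in (P, ≤) lying in P*
    (hcomplete : ∀ B ⊆ Set.range star, ∃ c ∈ Set.range star, IsGLB B c)
    (A : Set P) :
    ∃ b : P, pperp star A = pperp star {b} ∧
      pperp star {b} = {x : P | x ≤ star b} := by
  have symm : ∀ x y : P, y ≤ star x ↔ x ≤ star y := by
    intro x y
    rw [hstar, hstar]
    constructor <;> intro h z hz1 hz2 <;> exact h z hz2 hz1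
  obtain ⟨c, ⟨d, hd⟩, hglb⟩ := hcomplete (star '' A) (by
    rintro _ ⟨a, _, rfl⟩; exact ⟨a, rfl⟩)
  refine ⟨d, ?_, ?_⟩
  · ext x
    simp only [pperp, Set.mem_setOf_eq, Set.mem_singleton_iff, forall_eq]
    constructor
    · intro h
      rw [symm]
      rw [hd]
      exact hglb.2 (by rintro _ ⟨a, ha, rfl⟩; rw [symm]; exact h a ha)
    · intro h a ha
      rw [symm] at h ⊢
      rw [hd] at h
      exact le_trans h (hglb.1 ⟨a, ha, rfl⟩)
  · ext x
    simp only [pperp, Set.mem_setOf_eq, Set.mem_singleton_iff, forall_eq]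
    exact symm x d
end

section
/- Let (P, ≤, *, 0, 1) be a pseudocomplemented poset such that for every subset B of P* := {x* : x ∈ P} there exists an element c ∈ P* which is the greatest lower bound of B in (P, ≤). Then every closed subset of P is of the form x^⊥ for some x ∈ P, and every set x^⊥ is closed; that is, Cl(P) = { {y ∈ P : y ≤ x*} : x ∈ P }. -/
theorem stmt_14 {P : Type*} [PartialOrder P] [BoundedOrder P] (star : P → P)
    (hstar : ∀ x y : P, y ≤ star x ↔ ∀ z : P, z ≤ x → z ≤ y → z = ⊥)
    -- every subset of P* has a greatest lower bound in (P, ≤) lying in P*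
    (hcomplete : ∀ B ⊆ Set.range star, ∃ c ∈ Set.range star, IsGLB B c) :
    {A : Set P | pperp star (pperp star A) = A} =
      {B : Set P | ∃ x : P, B = {y : P | y ≤ star x}} := by
  have symm : ∀ x y : P, y ≤ star x ↔ x ≤ star y := by
    intro x y
    rw [hstar, hstar]
    exact ⟨fun h z hz hz' => h z hz' hz, fun h z hz hz' => h z hz' hz⟩
  have hsub : ∀ A : Set P, A ⊆ pperp star (pperp star A) := by
    intro A x hx y hy
    exact (symm x y).mpr (hy x hx)
  have hanti : ∀ A B : Set P, A ⊆ B → pperp star B ⊆ pperp star A := by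
    intro A B h x hx y hy
    exact hx y (h hy)
  have htriple : ∀ A : Set P, pperp star (pperp star (pperp star A)) = pperp star A := by
    intro A
    exact Set.Subset.antisymm (hanti _ _ (hsub A)) (hsub (pperp star A))
  ext A
  simp only [Set.mem_setOf_eq]
  constructor
  · intro hA
    set C := pperp star A with hC
    obtain ⟨c, ⟨x, hxc⟩, hglb⟩ := hcomplete (star '' C) (by rintro _ ⟨z, _, rfl⟩; exact ⟨z, rfl⟩)
    refine ⟨x, ?_⟩
    rw [← hA]
    ext y
    simp only [Set.mem_setOf_eq, hxc]
    constructor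
    · intro hy
      exact hglb.2 (by rintro _ ⟨z, hz, rfl⟩; exact (symm y z).mp (hy z hz))
    · intro hy z hz
      exact (symm y z).mpr (le_trans hy (hglb.1 ⟨z, hz, rfl⟩))
  · rintro ⟨x, rfl⟩
    have : {y : P | y ≤ star x} = pperp star {x} := by
      ext z
      simp only [Set.mem_setOf_eq, pperp, Set.mem_singleton_iff, forall_eq]
      exact symm x z
    rw [this, htriple]
end

section
/- Let (Q, ≤, *, 0, 1) be a pseudocomplemented poset and suppose a, d, f, g ∈ Q are such that f* ≠ g* and both f* and g* are maximal lower bounds of a* and d* within Q* := {x* : x ∈ Q} (i.e., f*, g* are maximal elements of the set of elements of Q* lying below both a* and d*). Then the eight elements a**, g*, f*, d**, d*, f**, g**, a* are pairwise distinct; f* and g* are ≤ both a* and d*; a** and d** are ≤ both f** and g**; the pairs (a*, d*), (f*, g*), (a*, a**), (d*, d**), (f*, f**), (g*, g**) are each incomparable; moreover d* ≰ a**, a* ≰ d**, f** ≰ g*, and g** ≰ f*. -/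
theorem stmt_16 {Q : Type*} [PartialOrder Q] [BoundedOrder Q] (star : Q → Q)
    (hstar : ∀ x y : Q, y ≤ star x ↔ ∀ z : Q, z ≤ x → z ≤ y → z = ⊥)
    (a d f g : Q)
    (hfg : star f ≠ star g)
    -- f* is a maximal lower bound of a* and d* within Q* = range star
    (hf : star f ≤ star a ∧ star f ≤ star d ∧
      ∀ z ∈ Set.range star, z ≤ star a → z ≤ star d → star f ≤ z → z = star f)
    -- g* is a maximal lower bound of a* and d* within Q* = range star
    (hg : star g ≤ star a ∧ star g ≤ star d ∧
      ∀ z ∈ Set.range star, z ≤ star a → z ≤ star d → star g ≤ z → z = star g) :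
    -- the eight elements a**, g*, f*, d**, d*, f**, g**, a* are pairwise distinct
    ([star (star a), star g, star f, star (star d), star d, star (star f),
        star (star g), star a].Pairwise (· ≠ ·)) ∧
    -- f*, g* ≤ a*, d*
    (star f ≤ star a ∧ star f ≤ star d ∧ star g ≤ star a ∧ star g ≤ star d) ∧
    -- a**, d** ≤ f**, g**
    (star (star a) ≤ star (star f) ∧ star (star a) ≤ star (star g) ∧
      star (star d) ≤ star (star f) ∧ star (star d) ≤ star (star g)) ∧
    -- incomparable pairs
    (¬ star a ≤ star d ∧ ¬ star d ≤ star a) ∧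
    (¬ star f ≤ star g ∧ ¬ star g ≤ star f) ∧
    (¬ star a ≤ star (star a) ∧ ¬ star (star a) ≤ star a) ∧
    (¬ star d ≤ star (star d) ∧ ¬ star (star d) ≤ star d) ∧
    (¬ star f ≤ star (star f) ∧ ¬ star (star f) ≤ star f) ∧
    (¬ star g ≤ star (star g) ∧ ¬ star (star g) ≤ star g) ∧
    -- moreover d* ≰ a**, a* ≰ d**, f** ≰ g*, g** ≰ f*
    ¬ star d ≤ star (star a) ∧ ¬ star a ≤ star (star d) ∧
    ¬ star (star f) ≤ star g ∧ ¬ star (star g) ≤ star f := by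
  -- basic lemmas
  have anti : ∀ x y : Q, x ≤ y → star y ≤ star x := by
    intro x y h
    exact (hstar x (star y)).mpr fun z hz1 hz2 =>
      (hstar y (star y)).mp le_rfl z (hz1.trans h) hz2
  have le2 : ∀ x : Q, x ≤ star (star x) := by
    intro x
    exact (hstar (star x) x).mpr fun z hz1 hz2 =>
      (hstar x (star x)).mp le_rfl z hz2 hz1
  have s3 : ∀ x : Q, star (star (star x)) = star x :=
    fun x => le_antisymm (anti _ _ (le2 x)) (le2 (star x))
  -- key facts
  have key1 : ∀ x : Q, star x ≤ star (star x) → star x = ⊥ :=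
    fun x h => (hstar (star x) (star x)).mp h (star x) le_rfl le_rfl
  have key2 : ∀ x : Q, star (star x) ≤ star x → x = ⊥ :=
    fun x h => (hstar x (star (star x))).mp h x le_rfl (le2 x)
  have sbot : star (⊥ : Q) = ⊤ :=
    le_antisymm le_top ((hstar ⊥ ⊤).mpr fun z hz _ => le_bot_iff.mp hz)
  have hF0 : star f ≠ ⊥ := by
    intro h
    exact hfg ((hf.2.2 (star g) ⟨g, rfl⟩ hg.1 hg.2.1 (h ▸ bot_le)).symm)
  have hG0 : star g ≠ ⊥ := by
    intro h
    exact hfg (hg.2.2 (star f) ⟨f, rfl⟩ hf.1 hf.2.1 (h ▸ bot_le))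
  have hAD : ¬ star a ≤ star d := by
    intro h
    have h1 := hf.2.2 (star a) ⟨a, rfl⟩ le_rfl h hf.1
    have h2 := hg.2.2 (star a) ⟨a, rfl⟩ le_rfl h hg.1
    exact hfg (h1.symm.trans h2)
  have hDA : ¬ star d ≤ star a := by
    intro h
    have h1 := hf.2.2 (star d) ⟨d, rfl⟩ h le_rfl hf.2.1
    have h2 := hg.2.2 (star d) ⟨d, rfl⟩ h le_rfl hg.2.1
    exact hfg (h1.symm.trans h2)
  have hFG : ¬ star f ≤ star g := fun h =>
    hfg (hf.2.2 (star g) ⟨g, rfl⟩ hg.1 hg.2.1 h).symm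
  have hGF : ¬ star g ≤ star f := fun h =>
    hfg (hg.2.2 (star f) ⟨f, rfl⟩ hf.1 hf.2.1 h)
  -- incomparability with double stars
  have hAA' : ¬ star a ≤ star (star a) := fun h => hF0 (le_bot_iff.mp (key1 a h ▸ hf.1))
  have hA'A : ¬ star (star a) ≤ star a := by
    intro h
    have := key2 a h
    exact hDA (by rw [this, sbot]; exact le_top)
  have hDD' : ¬ star d ≤ star (star d) := fun h => hF0 (le_bot_iff.mp (key1 d h ▸ hf.2.1))
  have hD'D : ¬ star (star d) ≤ star d := by
    intro h
    have := key2 d h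
    exact hAD (by rw [this, sbot]; exact le_top)
  have hFF' : ¬ star f ≤ star (star f) := fun h => hF0 (key1 f h)
  have hF'F : ¬ star (star f) ≤ star f := by
    intro h
    have hfb := key2 f h
    have : (⊤ : Q) ≤ star a := by rw [← sbot, ← hfb]; exact hf.1
    exact hDA (le_trans le_top (le_top.antisymm this ▸ this))
  have hGG' : ¬ star g ≤ star (star g) := fun h => hG0 (key1 g h)
  have hG'G : ¬ star (star g) ≤ star g := by
    intro h
    have hgb := key2 g h
    have : (⊤ : Q) ≤ star a := by rw [← sbot, ← hgb]; exact hg.1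
    exact hDA (le_top.trans this)
  have hDA' : ¬ star d ≤ star (star a) := fun h =>
    hF0 ((hstar (star a) (star d)).mp h (star f) hf.1 hf.2.1)
  have hAD' : ¬ star a ≤ star (star d) := fun h =>
    hF0 ((hstar (star d) (star a)).mp h (star f) hf.2.1 hf.1)
  -- a** ≤ f**, etc.
  have hAF : star (star a) ≤ star (star f) := anti _ _ hf.1
  have hAG : star (star a) ≤ star (star g) := anti _ _ hg.1
  have hDF : star (star d) ≤ star (star f) := anti _ _ hf.2.1
  have hDG : star (star d) ≤ star (star g) := anti _ _ hg.2.1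
  have hF'G : ¬ star (star f) ≤ star g := by
    intro h
    exact hA'A (le_trans hAF (h.trans hg.1))
  have hG'F : ¬ star (star g) ≤ star f := by
    intro h
    exact hA'A (le_trans hAG (h.trans hf.1))
  refine ⟨?_, ⟨hf.1, hf.2.1, hg.1, hg.2.1⟩, ⟨hAF, hAG, hDF, hDG⟩, ⟨hAD, hDA⟩,
    ⟨hFG, hGF⟩, ⟨hAA', hA'A⟩, ⟨hDD', hD'D⟩, ⟨hFF', hF'F⟩, ⟨hGG', hG'G⟩,
    hDA', hAD', hF'G, hG'F⟩
  -- pairwise distinctness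
  have n1 : star (star a) ≠ star g := fun h => hA'A (h ▸ hg.1)
  have n2 : star (star a) ≠ star f := fun h => hA'A (h ▸ hf.1)
  have n3 : star (star a) ≠ star (star d) := fun h => by
    have := congrArg star h; rw [s3, s3] at this; exact hAD this.le
  have n4 : star (star a) ≠ star d := fun h => hDA' h.ge
  have n5 : star (star a) ≠ star (star f) := fun h => by
    have := congrArg star h; rw [s3, s3] at this; exact hAD (this ▸ hf.2.1)
  have n6 : star (star a) ≠ star (star g) := fun h => by
    have := congrArg star h; rw [s3, s3] at this; exact hAD (this ▸ hg.2.1)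
  have n7 : star (star a) ≠ star a := fun h => hA'A h.le
  have n8 : star g ≠ star f := hfg.symm
  have n9 : star g ≠ star (star d) := fun h => hGG' (h ▸ hDG)
  have n10 : star g ≠ star d := fun h => hDA (h ▸ hg.1)
  have n11 : star g ≠ star (star f) := fun h => hF'G h.ge
  have n12 : star g ≠ star (star g) := fun h => hGG' h.le
  have n13 : star g ≠ star a := fun h => hAD (h ▸ hg.2.1)
  have n14 : star f ≠ star (star d) := fun h => hFF' (h ▸ hDF)
  have n15 : star f ≠ star d := fun h => hDA (h ▸ hf.1)
  have n16 : star f ≠ star (star f) := fun h => hFF' h.le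
  have n17 : star f ≠ star (star g) := fun h => hG'F h.ge
  have n18 : star f ≠ star a := fun h => hAD (h ▸ hf.2.1)
  have n19 : star (star d) ≠ star d := fun h => hD'D h.le
  have n20 : star (star d) ≠ star (star f) := fun h => by
    have := congrArg star h; rw [s3, s3] at this
    exact hDA (this.trans_le hf.1)
  have n21 : star (star d) ≠ star (star g) := fun h => by
    have := congrArg star h; rw [s3, s3] at this
    exact hDA (this.trans_le hg.1)
  have n22 : star (star d) ≠ star a := fun h => hAD' h.ge
  have n23 : star d ≠ star (star f) := fun h => hFF' (h ▸ hf.2.1)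
  have n24 : star d ≠ star (star g) := fun h => hGG' (h ▸ hg.2.1)
  have n25 : star d ≠ star a := fun h => hAD h.ge
  have n26 : star (star f) ≠ star (star g) := fun h => by
    have := congrArg star h; rw [s3, s3] at this; exact hfg this
  have n27 : star (star f) ≠ star a := fun h => hFF' (h.symm ▸ hf.1)
  have n28 : star (star g) ≠ star a := fun h => hGG' (h.symm ▸ hg.1)
  simp only [List.pairwise_cons, List.mem_cons, List.mem_singleton, List.not_mem_nil,
    forall_eq_or_imp, forall_eq, List.Pairwise.nil, and_true, IsEmpty.forall_iff,
    implies_true, or_false, List.mem_nil_iff, ne_eq]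
  and_intros <;> first | assumption
end

section
/- Let (Q, ≤, *, 0, 1) be a pseudocomplemented poset satisfying the ascending chain condition. If (Q*, ≤) is not a meet-semilattice, i.e., some two elements of Q* have no greatest lower bound within Q*, then there exist a, d, f, g ∈ Q such that f* and g* are two distinct maximal lower bounds of a* and d* within Q*, the eight elements a**, g*, f*, d**, d*, f**, g**, a* are pairwise distinct, f* and g* are ≤ both a* and d*, a** and d** are ≤ both f** and g**, and the pairs (a*, d*), (f*, g*), (a*, a**), (d*, d**), (f*, f**), (g*, g**) are each incomparable. -/
theorem stmt_17 {Q : Type*} [PartialOrder Q] [BoundedOrder Q] [WellFoundedGT Q]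
    (star : Q → Q)
    (hstar : ∀ x y : Q, y ≤ star x ↔ ∀ z : Q, z ≤ x → z ≤ y → z = ⊥)
    -- (Q*, ≤) is not a meet-semilattice: some two elements of Q* have no glb within Q*
    (hns : ∃ a ∈ Set.range star, ∃ b ∈ Set.range star,
      ¬ ∃ c ∈ Set.range star, c ≤ a ∧ c ≤ b ∧
        ∀ e ∈ Set.range star, e ≤ a → e ≤ b → e ≤ c) :
    ∃ a d f g : Q,
      -- f* and g* are two distinct maximal lower bounds of a* and d* within Q*
      star f ≠ star g ∧
      (star f ≤ star a ∧ star f ≤ star d ∧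
        ∀ z ∈ Set.range star, z ≤ star a → z ≤ star d → star f ≤ z → z = star f) ∧
      (star g ≤ star a ∧ star g ≤ star d ∧
        ∀ z ∈ Set.range star, z ≤ star a → z ≤ star d → star g ≤ z → z = star g) ∧
      -- the eight elements a**, g*, f*, d**, d*, f**, g**, a* are pairwise distinct
      ([star (star a), star g, star f, star (star d), star d, star (star f),
          star (star g), star a].Pairwise (· ≠ ·)) ∧
      -- f*, g* ≤ a*, d*
      (star f ≤ star a ∧ star f ≤ star d ∧ star g ≤ star a ∧ star g ≤ star d) ∧
      -- a**, d** ≤ f**, g**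
      (star (star a) ≤ star (star f) ∧ star (star a) ≤ star (star g) ∧
        star (star d) ≤ star (star f) ∧ star (star d) ≤ star (star g)) ∧
      -- incomparable pairs
      (¬ star a ≤ star d ∧ ¬ star d ≤ star a) ∧
      (¬ star f ≤ star g ∧ ¬ star g ≤ star f) ∧
      (¬ star a ≤ star (star a) ∧ ¬ star (star a) ≤ star a) ∧
      (¬ star d ≤ star (star d) ∧ ¬ star (star d) ≤ star d) ∧
      (¬ star f ≤ star (star f) ∧ ¬ star (star f) ≤ star f) ∧
      (¬ star g ≤ star (star g) ∧ ¬ star (star g) ≤ star g) := by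
  -- basic lemmas
  have le_ss : ∀ x : Q, x ≤ star (star x) := fun x =>
    (hstar (star x) x).mpr (fun z h1 h2 => (hstar x z).mp h1 z h2 le_rfl)
  have anti : ∀ {x y : Q}, x ≤ y → star y ≤ star x := fun {x y} hxy =>
    (hstar x (star y)).mpr (fun z hzx hzs => (hstar y z).mp hzs z (hzx.trans hxy) le_rfl)
  have meet_bot : ∀ {z w : Q}, z ≤ w → z ≤ star w → z = ⊥ := fun {z w} h1 h2 =>
    (hstar w z).mp h2 z h1 le_rfl
  have sstar_le : ∀ {x : Q}, star (star x) ≤ star x → x = ⊥ := fun {x} h =>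
    meet_bot le_rfl ((le_ss x).trans h)
  have triple : ∀ x : Q, star (star (star x)) = star x := fun x =>
    le_antisymm (anti (le_ss x)) (le_ss (star x))
  have star_bot_top : (⊤ : Q) ≤ star ⊥ :=
    (hstar ⊥ ⊤).mpr (fun z hz _ => le_bot_iff.mp hz)
  have star_top_bot : star (⊤ : Q) = ⊥ :=
    (hstar ⊤ (star ⊤)).mp le_rfl (star ⊤) le_top le_rfl
  obtain ⟨A, ⟨a, rfl⟩, B, ⟨d, rfl⟩, hglb⟩ := hns
  -- the set of common lower bounds inside Q*
  set S : Set Q := {z | z ∈ Set.range star ∧ z ≤ star a ∧ z ≤ star d} with hS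
  have hbotS : (⊥ : Q) ∈ S := ⟨⟨⊤, star_top_bot⟩, bot_le, bot_le⟩
  have exmax : ∀ s ∈ S, ∃ m ∈ S, s ≤ m ∧ ∀ x ∈ S, m ≤ x → x = m := by
    intro s hs
    obtain ⟨m, ⟨hmS, hsm⟩, hmax⟩ :=
      wellFounded_gt.has_min {z | z ∈ S ∧ s ≤ z} ⟨s, hs, le_rfl⟩
    refine ⟨m, hmS, hsm, fun x hx hmx => ?_⟩
    by_contra hne
    exact hmax x ⟨hx, hsm.trans hmx⟩ (lt_of_le_of_ne hmx (Ne.symm hne))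
  obtain ⟨p, hpS, -, hpmax⟩ := exmax ⊥ hbotS
  -- p is not a glb, so there is e ∈ S with ¬ e ≤ p
  have : ¬ ∀ e ∈ Set.range star, e ≤ star a → e ≤ star d → e ≤ p := fun h =>
    hglb ⟨p, hpS.1, hpS.2.1, hpS.2.2, h⟩
  push_neg at this
  obtain ⟨e, he1, he2, he3, hep⟩ := this
  obtain ⟨q, hqS, heq, hqmax⟩ := exmax e ⟨he1, he2, he3⟩
  have hpq : p ≠ q := fun h => hep (h ▸ heq)
  obtain ⟨f, rfl⟩ := hpS.1
  obtain ⟨g, rfl⟩ := hqS.1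
  have hFA : star f ≤ star a := hpS.2.1
  have hFD : star f ≤ star d := hpS.2.2
  have hGA : star g ≤ star a := hqS.2.1
  have hGD : star g ≤ star d := hqS.2.2
  have hne_fg : star f ≠ star g := hpq
  have hninc_fg : ¬ star f ≤ star g := fun h => hne_fg (hpmax (star g) hqS h).symm
  have hninc_gf : ¬ star g ≤ star f := fun h => hne_fg (hqmax (star f) hpS h)
  have hninc_ad : ¬ star a ≤ star d := fun h =>
    hglb ⟨star a, ⟨a, rfl⟩, le_rfl, h, fun e _ he _ => he⟩
  have hninc_da : ¬ star d ≤ star a := fun h =>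
    hglb ⟨star d, ⟨d, rfl⟩, h, le_rfl, fun e _ _ he => he⟩
  have hFbot : star f ≠ ⊥ := fun h => hninc_fg (h ▸ bot_le)
  have hGbot : star g ≠ ⊥ := fun h => hninc_gf (h ▸ bot_le)
  have hAbot : star a ≠ ⊥ := fun h => hFbot (le_bot_iff.mp (h ▸ hFA))
  have hDbot : star d ≠ ⊥ := fun h => hFbot (le_bot_iff.mp (h ▸ hFD))
  -- ¬ x* ≤ x**
  have h_f_nle : ¬ star f ≤ star (star f) := fun h => hFbot (meet_bot le_rfl h)
  have h_g_nle : ¬ star g ≤ star (star g) := fun h => hGbot (meet_bot le_rfl h)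
  have h_a_nle : ¬ star a ≤ star (star a) := fun h => hAbot (meet_bot le_rfl h)
  have h_d_nle : ¬ star d ≤ star (star d) := fun h => hDbot (meet_bot le_rfl h)
  -- ¬ x** ≤ x*
  have h_a2_nle : ¬ star (star a) ≤ star a := fun h => by
    have ha : a = ⊥ := sstar_le h
    exact hninc_da (by rw [ha]; exact le_trans le_top star_bot_top)
  have h_d2_nle : ¬ star (star d) ≤ star d := fun h => by
    have hd : d = ⊥ := sstar_le h
    exact hninc_ad (by rw [hd]; exact le_trans le_top star_bot_top)
  have h_f2_nle : ¬ star (star f) ≤ star f := fun h => by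
    have hf : f = ⊥ := sstar_le h
    have htop : star f = ⊤ := le_antisymm le_top (by rw [hf]; exact star_bot_top)
    exact hninc_da (le_trans le_top (htop ▸ hFA))
  have h_g2_nle : ¬ star (star g) ≤ star g := fun h => by
    have hg : g = ⊥ := sstar_le h
    have htop : star g = ⊤ := le_antisymm le_top (by rw [hg]; exact star_bot_top)
    exact hninc_da (le_trans le_top (htop ▸ hGA))
  -- upward order facts
  have hA2F2 : star (star a) ≤ star (star f) := anti hFA
  have hA2G2 : star (star a) ≤ star (star g) := anti hGA
  have hD2F2 : star (star d) ≤ star (star f) := anti hFD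
  have hD2G2 : star (star d) ≤ star (star g) := anti hGD
  refine ⟨a, d, f, g, hne_fg,
    ⟨hFA, hFD, fun z hz h1 h2 h3 => hpmax z ⟨hz, h1, h2⟩ h3⟩,
    ⟨hGA, hGD, fun z hz h1 h2 h3 => hqmax z ⟨hz, h1, h2⟩ h3⟩,
    ?_,
    ⟨hFA, hFD, hGA, hGD⟩,
    ⟨hA2F2, hA2G2, hD2F2, hD2G2⟩,
    ⟨hninc_ad, hninc_da⟩, ⟨hninc_fg, hninc_gf⟩,
    ⟨h_a_nle, h_a2_nle⟩, ⟨h_d_nle, h_d2_nle⟩,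
    ⟨h_f_nle, h_f2_nle⟩, ⟨h_g_nle, h_g2_nle⟩⟩
  -- the 28 distinctness facts
  simp only [List.pairwise_cons, List.mem_cons, List.mem_singleton, List.not_mem_nil,
    false_imp_iff, forall_eq_or_imp, forall_eq, implies_true, and_true, List.Pairwise.nil]
  refine ⟨⟨?_, ?_, ?_, ?_, ?_, ?_, ?_⟩, ⟨?_, ?_, ?_, ?_, ?_, ?_⟩,
    ⟨?_, ?_, ?_, ?_, ?_⟩, ⟨?_, ?_, ?_, ?_⟩, ⟨?_, ?_, ?_⟩, ⟨?_, ?_⟩, ?_⟩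
  -- a** ≠ g*
  · exact fun h => h_g_nle (h ▸ hA2G2)
  -- a** ≠ f*
  · exact fun h => h_f_nle (h ▸ hA2F2)
  -- a** ≠ d**
  · intro h
    have := congrArg star h
    rw [triple, triple] at this
    exact hninc_ad (le_of_eq this)
  -- a** ≠ d*
  · intro h
    exact hFbot (meet_bot hFA (hFD.trans (le_of_eq h.symm)))
  -- a** ≠ f**
  · intro h
    have := congrArg star h
    rw [triple, triple] at this
    exact hninc_ad (this ▸ hFD)
  -- a** ≠ g**
  · intro h
    have := congrArg star h
    rw [triple, triple] at this
    exact hninc_ad (this ▸ hGD)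
  -- a** ≠ a*
  · exact fun h => h_a2_nle (le_of_eq h)
  -- g* ≠ f*
  · exact hne_fg.symm
  -- g* ≠ d**
  · exact fun h => hGbot (meet_bot hGD (le_of_eq h))
  -- g* ≠ d*
  · exact fun h => hninc_da (h ▸ hGA)
  -- g* ≠ f**
  · exact fun h => h_a2_nle ((hA2F2.trans (le_of_eq h.symm)).trans hGA)
  -- g* ≠ g**
  · exact fun h => h_g_nle (le_of_eq h)
  -- g* ≠ a*
  · exact fun h => hninc_ad (h ▸ hGD)
  -- f* ≠ d**
  · exact fun h => hFbot (meet_bot hFD (le_of_eq h))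
  -- f* ≠ d*
  · exact fun h => hninc_da (h ▸ hFA)
  -- f* ≠ f**
  · exact fun h => h_f_nle (le_of_eq h)
  -- f* ≠ g**
  · exact fun h => h_a2_nle ((hA2G2.trans (le_of_eq h.symm)).trans hFA)
  -- f* ≠ a*
  · exact fun h => hninc_ad (h ▸ hFD)
  -- d** ≠ d*
  · exact fun h => h_d2_nle (le_of_eq h)
  -- d** ≠ f**
  · intro h
    have := congrArg star h
    rw [triple, triple] at this
    exact hninc_da (this ▸ hFA)
  -- d** ≠ g**
  · intro h
    have := congrArg star h
    rw [triple, triple] at this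
    exact hninc_da (this ▸ hGA)
  -- d** ≠ a*
  · intro h
    exact hFbot (meet_bot hFD (hFA.trans (le_of_eq h.symm)))
  -- d* ≠ f**
  · exact fun h => h_f_nle (hFD.trans (le_of_eq h))
  -- d* ≠ g**
  · exact fun h => h_g_nle (hGD.trans (le_of_eq h))
  -- d* ≠ a*
  · exact fun h => hninc_da (le_of_eq h)
  -- f** ≠ g**
  · intro h
    have := congrArg star h
    rw [triple, triple] at this
    exact hne_fg this
  -- f** ≠ a*
  · exact fun h => h_a2_nle (hA2F2.trans (le_of_eq h))
  -- g** ≠ a*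
  · exact fun h => h_a2_nle (hA2G2.trans (le_of_eq h))
end

section
/- Let (Q, ≤, *, 0, 1) be a pseudocomplemented poset satisfying the ascending chain condition such that (Q*, ≤) is not a meet-semilattice. Then Q* contains four pairwise distinct elements p, q, r, s, all different from 0 and 1, such that r ≤ p, r ≤ q, s ≤ p, s ≤ q, r ∥ s and p ∥ q. -/
theorem stmt_18 {Q : Type*} [PartialOrder Q] [BoundedOrder Q] [WellFoundedGT Q]
    (star : Q → Q)
    (hstar : ∀ x y : Q, y ≤ star x ↔ ∀ z : Q, z ≤ x → z ≤ y → z = ⊥)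
    -- (Q*, ≤) is not a meet-semilattice: some two elements of Q* have no glb within Q*
    (hns : ∃ a ∈ Set.range star, ∃ b ∈ Set.range star,
      ¬ ∃ c ∈ Set.range star, c ≤ a ∧ c ≤ b ∧
        ∀ e ∈ Set.range star, e ≤ a → e ≤ b → e ≤ c) :
    ∃ p ∈ Set.range star, ∃ q ∈ Set.range star,
      ∃ r ∈ Set.range star, ∃ s ∈ Set.range star,
        ([p, q, r, s].Pairwise (· ≠ ·)) ∧
        p ≠ ⊥ ∧ p ≠ ⊤ ∧ q ≠ ⊥ ∧ q ≠ ⊤ ∧ r ≠ ⊥ ∧ r ≠ ⊤ ∧ s ≠ ⊥ ∧ s ≠ ⊤ ∧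
        r ≤ p ∧ r ≤ q ∧ s ≤ p ∧ s ≤ q ∧
        ¬ r ≤ s ∧ ¬ s ≤ r ∧ ¬ p ≤ q ∧ ¬ q ≤ p := by
  obtain ⟨a, ha, b, hb, hglb⟩ := hns
  -- a and b are incomparable
  have hab : ¬ a ≤ b := fun h => hglb ⟨a, ha, le_rfl, h, fun e _ hea _ => hea⟩
  have hba : ¬ b ≤ a := fun h => hglb ⟨b, hb, h, le_rfl, fun e _ _ heb => heb⟩
  -- ⊥ ∈ range star
  have hbot : star ⊤ = ⊥ := (hstar ⊤ (star ⊤)).mp le_rfl (star ⊤) le_top le_rfl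
  have hbotr : (⊥ : Q) ∈ Set.range star := ⟨⊤, hbot⟩
  -- the set of common lower bounds of a, b within Q*
  set L : Set Q := {e | e ∈ Set.range star ∧ e ≤ a ∧ e ≤ b} with hL
  have hLne : L.Nonempty := ⟨⊥, hbotr, bot_le, bot_le⟩
  obtain ⟨r, hrL, hrmax⟩ := (wellFounded_gt (α := Q)).has_min L hLne
  obtain ⟨hrr, hra, hrb⟩ := hrL
  -- r is not the glb, so there is s ∈ L with ¬ s ≤ r
  have : ¬ ∀ e ∈ Set.range star, e ≤ a → e ≤ b → e ≤ r :=
    fun h => hglb ⟨r, hrr, hra, hrb, h⟩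
  push_neg at this
  obtain ⟨s, hsr', hsa, hsb, hsr⟩ := this
  have hsL : s ∈ L := ⟨hsr', hsa, hsb⟩
  have hrs : ¬ r ≤ s := by
    intro h
    exact hrmax s hsL (lt_of_le_of_ne h (fun he => hsr (he ▸ le_rfl)))
  -- nontriviality facts
  have hane : a ≠ ⊥ := fun h => hab (h ▸ bot_le)
  have hate : a ≠ ⊤ := fun h => hba (h ▸ le_top)
  have hbne : b ≠ ⊥ := fun h => hba (h ▸ bot_le)
  have hbte : b ≠ ⊤ := fun h => hab (h ▸ le_top)
  have hrbot : r ≠ ⊥ := fun h => hrs (h ▸ bot_le)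
  have hrtop : r ≠ ⊤ := fun h => hate (le_antisymm le_top (h ▸ hra))
  have hsbot : s ≠ ⊥ := fun h => hsr (h ▸ bot_le)
  have hstop : s ≠ ⊤ := fun h => hate (le_antisymm le_top (h ▸ hsa))
  refine ⟨a, ha, b, hb, r, hrr, s, hsr', ?_, hane, hate, hbne, hbte,
    hrbot, hrtop, hsbot, hstop, hra, hrb, hsa, hsb, hrs, hsr, hab, hba⟩
  have hanb : a ≠ b := fun h => hab (h ▸ le_rfl)
  have har : a ≠ r := fun h => hab (h ▸ hrb)
  have has : a ≠ s := fun h => hab (h ▸ hsb)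
  have hbr : b ≠ r := fun h => hba (h ▸ hra)
  have hbs : b ≠ s := fun h => hba (h ▸ hsa)
  have hrsne : r ≠ s := fun h => hrs (h ▸ le_rfl)
  simp [List.pairwise_cons, hanb, har, has, hbr, hbs, hrsne]
end
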